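/- arXiv:1509.05458 — 2 statements merged into one kernel-verified Lean document; each statement's English description precedes it below -/
import Mathlib

section
/- Let L be a Moufang loop with a central subloop Z of order 2 such that every square, every commutator [x,y], and every associator [x,y,z] of L lies in Z. Then for all x, y ∈ L: (x*y)*(x*y) = ((x*x)*(y*y))*[x,y]. -/
/- Writing `x * y = (y * x) * [x, y]` with `[x, y]` central reduces the claim to
`(x * y) * (y * x) = (x * x) * (y * y)`, and the Moufang identity with `z = y` turns the left
side into `(x * (y * y)) * x`, which the central square `y * y` rearranges into the right side. -/

/-- `a` lies in the center of the loop `L`. -/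
def Central {L : Type*} [Mul L] (a : L) : Prop :=
  (∀ y : L, a * y = y * a) ∧
  (∀ y z : L, a * (y * z) = (a * y) * z) ∧
  (∀ y z : L, y * (a * z) = (y * a) * z) ∧
  (∀ y z : L, y * (z * a) = (y * z) * a)

theorem mul_mul_mul_swap_of_central_mul_self {L : Type*} [Mul L]
    (hmo : ∀ x y z : L, (x * y) * (z * x) = (x * (y * z)) * x) {x y : L}
    (hy : Central (y * y)) : (x * y) * (y * x) = (x * x) * (y * y) := by
  obtain ⟨hy_comm, hy_assoc_left, -, -⟩ := hy
  calc (x * y) * (y * x) = (x * (y * y)) * x := hmo x y y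
    _ = ((y * y) * x) * x := by rw [hy_comm x]
    _ = (y * y) * (x * x) := (hy_assoc_left x x).symm
    _ = (x * x) * (y * y) := hy_comm (x * x)

theorem square_of_product_general
    (L : Type*) [Mul L]
    (hmo : ∀ x y z : L, (x * y) * (z * x) = (x * (y * z)) * x)
    (comm : L → L → L) (hcomm : ∀ x y : L, x * y = (y * x) * comm x y)
    (Z : Set L)
    (hZcentral : ∀ n ∈ Z, Central n)
    (hsq : ∀ x : L, x * x ∈ Z)
    (hc : ∀ x y : L, comm x y ∈ Z) :
    ∀ x y : L, (x * y) * (x * y) = ((x * x) * (y * y)) * comm x y := by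
  intro x y
  obtain ⟨-, -, -, hc_assoc_right⟩ := hZcentral _ (hc x y)
  calc (x * y) * (x * y) = (x * y) * ((y * x) * comm x y) := by rw [← hcomm]
    _ = ((x * y) * (y * x)) * comm x y := hc_assoc_right _ _
    _ = ((x * x) * (y * y)) * comm x y := by
      rw [mul_mul_mul_swap_of_central_mul_self hmo (hZcentral _ (hsq y))]

theorem square_of_product
    (L : Type*) [Mul L] [One L]
    (hl : ∀ a b : L, ∃! x : L, a * x = b)
    (hr : ∀ a b : L, ∃! y : L, y * a = b)
    (hid : ∀ x : L, 1 * x = x ∧ x * 1 = x)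
    (hmo : ∀ x y z : L, (x * y) * (z * x) = (x * (y * z)) * x)
    (comm : L → L → L) (hcomm : ∀ x y : L, x * y = (y * x) * comm x y)
    (assoc : L → L → L → L)
    (hassoc : ∀ x y z : L, (x * y) * z = (x * (y * z)) * assoc x y z)
    (Z : Set L)
    (hZ1 : (1 : L) ∈ Z)
    (hZmul : ∀ a ∈ Z, ∀ b ∈ Z, a * b ∈ Z)
    (hZcentral : ∀ n ∈ Z, Central n)
    (hZcard : Z.ncard = 2)
    (hsq : ∀ x : L, x * x ∈ Z)
    (hc : ∀ x y : L, comm x y ∈ Z)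
    (ha : ∀ x y z : L, assoc x y z ∈ Z) :
    ∀ x y : L, (x * y) * (x * y) = ((x * x) * (y * y)) * comm x y :=
  square_of_product_general L hmo comm hcomm Z hZcentral hsq hc
end

section
/- Let L be a Moufang loop with a central subloop Z of order 2 such that every square, every commutator [x,y], and every associator [x,y,z] of L lies in Z. Then for all x, y, z ∈ L: [x*y, z] = ([x,z]*[y,z])*[x,y,z]. -/
section

variable {L : Type*}

def IsAssociator [Mul L] (assoc : L → L → L → L) : Prop :=
  ∀ x y z : L, x * y * z = x * (y * z) * assoc x y z

def IsCommutator [Mul L] (comm : L → L → L) : Prop :=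
  ∀ x y : L, x * y = y * x * comm x y

variable (L) in
def IsMoufang [Mul L] : Prop :=
  ∀ x y z : L, x * y * (z * x) = x * (y * z) * x

theorem Central.isMulCentral [Mul L] {a : L} (h : Central a) : IsMulCentral a :=
  ⟨h.1, h.2.1, fun y z => (h.2.2.2 y z).symm⟩

theorem IsMulCentral.mul_mul_cancel [MulOneClass L] {n : L} (hn : IsMulCentral n)
    (hn2 : n * n = 1) (m : L) : m * n * n = m := by
  rw [hn.right_assoc, hn2, mul_one]

theorem mul_self_eq_one_of_ncard_eq_two [MulOneClass L] [IsLeftCancelMul L] {Z : Set L}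
    (hZ1 : (1 : L) ∈ Z) (hZmul : ∀ a ∈ Z, ∀ b ∈ Z, a * b ∈ Z) (hZcard : Z.ncard = 2)
    {n : L} (hn : n ∈ Z) : n * n = 1 := by
  by_cases h1 : n = 1
  · rw [h1, mul_one]
  have hZ : ({1, n} : Set L) = Z :=
    Set.eq_of_subset_of_ncard_le (Set.insert_subset hZ1 (Set.singleton_subset_iff.2 hn))
      (by rw [hZcard, Set.ncard_pair (Ne.symm h1)])
      (Set.finite_of_ncard_ne_zero (by omega))
  have hnn : n * n ∈ ({1, n} : Set L) := hZ ▸ hZmul n hn n hn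
  rcases hnn with hnn | hnn
  · exact hnn
  · exact absurd (mul_left_cancel (hnn.trans (mul_one n).symm)) h1

section Mul

variable [Mul L] [IsLeftCancelMul L] {assoc : L → L → L → L}

theorem assoc_mul_left_of_isMulCentral (hassoc : IsAssociator assoc) {n : L}
    (hn : IsMulCentral n) (u v w : L) : assoc (n * u) v w = assoc u v w := by
  refine mul_left_cancel (a := n * u * (v * w)) ?_
  calc n * u * (v * w) * assoc (n * u) v w
      = n * u * v * w := (hassoc _ _ _).symm
    _ = n * (u * v * w) := by rw [← hn.left_assoc, ← hn.left_assoc]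
    _ = n * (u * (v * w) * assoc u v w) := by rw [hassoc]
    _ = n * u * (v * w) * assoc u v w := by rw [hn.left_assoc, hn.left_assoc]

theorem assoc_mul_eq_of_isMoufang (hmo : IsMoufang L) (hassoc : IsAssociator assoc)
    {x y z : L} (hA : IsMulCentral (assoc x y z)) : assoc (x * y) z x = assoc x y z := by
  refine mul_left_cancel (a := x * (y * z) * x) ?_
  calc x * (y * z) * x * assoc (x * y) z x
      = x * y * (z * x) * assoc (x * y) z x := by rw [hmo]
    _ = x * y * z * x := (hassoc _ _ _).symm
    _ = x * (y * z) * assoc x y z * x := by rw [hassoc x y z]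
    _ = x * (y * z) * x * assoc x y z := (hA.right_comm _ _).symm

end Mul

section Comm

variable [Mul L] [IsCancelMul L] {comm : L → L → L}

theorem comm_mul_swap_left (hcomm : IsCommutator comm) {x y : L} (hc : IsMulCentral (comm x y))
    (z : L) : comm (x * y) z = comm (y * x) z := by
  refine mul_left_cancel (a := z * (y * x)) (mul_right_cancel (b := comm x y) ?_)
  calc z * (y * x) * comm (x * y) z * comm x y
      = z * (y * x) * comm x y * comm (x * y) z := hc.right_comm _ _
    _ = x * y * z := by rw [hc.right_assoc, ← hcomm x y, ← hcomm]
    _ = z * (y * x) * comm (y * x) z * comm x y := by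
      rw [hcomm x y, ← hc.right_comm, hcomm (y * x) z]

end Comm

section MulOneClass

variable [MulOneClass L] [IsLeftCancelMul L] {assoc : L → L → L → L}

theorem assoc_eq_one_of_isMulCentral (hassoc : IsAssociator assoc) {n : L}
    (hn : IsMulCentral n) (u w : L) : assoc n u w = 1 := by
  refine mul_left_cancel (a := n * (u * w)) ?_
  rw [← hassoc, mul_one, hn.left_assoc]

theorem mul_self_mul_of_isMoufang (hmo : IsMoufang L) (hassoc : IsAssociator assoc)
    (hsq : ∀ x : L, IsMulCentral (x * x)) (hA : ∀ x y z, IsMulCentral (assoc x y z))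
    (x u : L) : x * x * u = x * (x * u) := by
  rw [hassoc, ← assoc_mul_eq_of_isMoufang hmo hassoc (hA x x u),
    assoc_eq_one_of_isMulCentral hassoc (hsq x), mul_one]

theorem assoc_self_mul_mid (hmo : IsMoufang L) (hassoc : IsAssociator assoc)
    (hsq : ∀ x : L, IsMulCentral (x * x)) (hA : ∀ x y z, IsMulCentral (assoc x y z))
    (hA2 : ∀ x y z, assoc x y z * assoc x y z = 1) (x z w : L) :
    assoc x (x * z) w = assoc x z w := by
  have halt := mul_self_mul_of_isMoufang hmo hassoc hsq hA
  refine mul_left_cancel (a := x * x * (z * w) * assoc x z w) ?_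
  calc x * x * (z * w) * assoc x z w * assoc x (x * z) w
      = x * (x * (z * w) * assoc x z w) * assoc x (x * z) w := by
        rw [← (hA x z w).right_assoc, halt]
    _ = x * (x * z) * w := by rw [← hassoc, ← hassoc]
    _ = x * x * (z * w) := by rw [← halt, (hsq x).left_assoc]
    _ = x * x * (z * w) * assoc x z w * assoc x z w :=
        ((hA x z w).mul_mul_cancel (hA2 x z w) _).symm

theorem assoc_rotate (hmo : IsMoufang L) (hassoc : IsAssociator assoc)
    (hsq : ∀ x : L, IsMulCentral (x * x)) (hA : ∀ x y z, IsMulCentral (assoc x y z))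
    (hA2 : ∀ x y z, assoc x y z * assoc x y z = 1) (a b c : L) :
    assoc a b c = assoc c a b := by
  calc assoc a b c
      = assoc (c * c * a) b c := (assoc_mul_left_of_isMulCentral hassoc (hsq c) a b c).symm
    _ = assoc (c * (c * a)) b c := by rw [mul_self_mul_of_isMoufang hmo hassoc hsq hA]
    _ = assoc c (c * a) b := assoc_mul_eq_of_isMoufang hmo hassoc (hA _ _ _)
    _ = assoc c a b := assoc_self_mul_mid hmo hassoc hsq hA hA2 c a b

theorem comm_mul_left_eq_assoc_swap {comm : L → L → L} (hmo : IsMoufang L)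
    (hassoc : IsAssociator assoc) (hcomm : IsCommutator comm)
    (hsq : ∀ x : L, IsMulCentral (x * x))
    (hA : ∀ x y z, IsMulCentral (assoc x y z)) (hA2 : ∀ x y z, assoc x y z * assoc x y z = 1)
    (hC : ∀ x y, IsMulCentral (comm x y)) (x y z : L) :
    comm (x * y) z = comm x z * comm y z * assoc y x z := by
  have hrot := assoc_rotate hmo hassoc hsq hA hA2
  have hzxy : z * x * y = z * (x * y) * assoc x y z := by
    rw [hassoc z x y, hrot z x y, hrot y z x]
  have hxzy : x * (z * y) = x * z * y * assoc y x z := by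
    rw [hassoc x z y, hrot x z y, (hA y x z).mul_mul_cancel (hA2 y x z)]
  refine mul_left_cancel (a := z * (x * y)) ?_
  calc z * (x * y) * comm (x * y) z
      = x * y * z := (hcomm _ _).symm
    _ = x * (z * y * comm y z) * assoc x y z := by rw [hassoc x y z, hcomm y z]
    _ = z * x * comm x z * y * assoc y x z * comm y z * assoc x y z := by
      rw [← (hC y z).right_assoc, hxzy, hcomm x z]
    _ = z * (x * y) * assoc x y z * comm x z * assoc y x z * comm y z * assoc x y z := by
      rw [← (hC x z).right_comm (z * x) y, hzxy]
    _ = z * (x * y) * comm x z * comm y z * assoc y x z := by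
      rw [(hA x y z).right_comm (z * (x * y) * assoc x y z * comm x z * assoc y x z),
        (hA x y z).right_comm (z * (x * y) * assoc x y z * comm x z),
        (hA x y z).right_comm (z * (x * y) * assoc x y z),
        (hA x y z).mul_mul_cancel (hA2 x y z), (hC y z).right_comm]
    _ = z * (x * y) * (comm x z * comm y z * assoc y x z) := by
      rw [(hC y z).right_assoc, (hA y x z).right_assoc]

end MulOneClass

theorem comm_mul_left [MulOneClass L] [IsCancelMul L] {assoc : L → L → L → L}
    {comm : L → L → L} (hmo : IsMoufang L) (hassoc : IsAssociator assoc)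
    (hcomm : IsCommutator comm) (hsq : ∀ x : L, IsMulCentral (x * x))
    (hA : ∀ x y z, IsMulCentral (assoc x y z)) (hA2 : ∀ x y z, assoc x y z * assoc x y z = 1)
    (hC : ∀ x y, IsMulCentral (comm x y)) (x y z : L) :
    comm (x * y) z = comm x z * comm y z * assoc x y z := by
  rw [comm_mul_swap_left hcomm (hC x y),
    comm_mul_left_eq_assoc_swap hmo hassoc hcomm hsq hA hA2 hC, ((hC y z).comm _).eq]

end

theorem comm_of_product
    (L : Type*) [Mul L] [One L]
    (hl : ∀ a b : L, ∃! x : L, a * x = b)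
    (hr : ∀ a b : L, ∃! y : L, y * a = b)
    (hid : ∀ x : L, 1 * x = x ∧ x * 1 = x)
    (hmo : ∀ x y z : L, (x * y) * (z * x) = (x * (y * z)) * x)
    (comm : L → L → L) (hcomm : ∀ x y : L, x * y = (y * x) * comm x y)
    (assoc : L → L → L → L)
    (hassoc : ∀ x y z : L, (x * y) * z = (x * (y * z)) * assoc x y z)
    (Z : Set L)
    (hZ1 : (1 : L) ∈ Z)
    (hZmul : ∀ a ∈ Z, ∀ b ∈ Z, a * b ∈ Z)
    (hZcentral : ∀ n ∈ Z, Central n)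
    (hZcard : Z.ncard = 2)
    (hsq : ∀ x : L, x * x ∈ Z)
    (hc : ∀ x y : L, comm x y ∈ Z)
    (ha : ∀ x y z : L, assoc x y z ∈ Z) :
    ∀ x y z : L, comm (x * y) z = (comm x z * comm y z) * assoc x y z := by
  let _ : MulOneClass L := { one_mul := fun x => (hid x).1, mul_one := fun x => (hid x).2 }
  have : IsCancelMul L :=
    { mul_left_cancel := fun a _ c h => (hl a (a * c)).unique h rfl
      mul_right_cancel := fun a _ c h => (hr a (c * a)).unique h rfl }
  have hZc (n : L) (hn : n ∈ Z) : IsMulCentral n := (hZcentral n hn).isMulCentral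
  have hZ2 (n : L) (hn : n ∈ Z) : n * n = 1 :=
    mul_self_eq_one_of_ncard_eq_two hZ1 hZmul hZcard hn
  exact comm_mul_left hmo hassoc hcomm (fun x => hZc _ (hsq x)) (fun x y z => hZc _ (ha x y z))
    (fun x y z => hZ2 _ (ha x y z)) (fun x y => hZc _ (hc x y))
end
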